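/- Let n ≥ 1 and let S_{Δ_n} denote piecewise linear interpolation at the equidistant knots 0, 1/n, …, 1: for x ∈ [(k−1)/n, k/n] with 1 ≤ k ≤ n, S_{Δ_n} f(x) = (k − nx)·f((k−1)/n) + (nx − k + 1)·f(k/n). Then for all f, g : [0,1] → ℝ and all x ∈ [0,1], |S_{Δ_n}(f·g)(x) − S_{Δ_n} f(x)·S_{Δ_n} g(x)| ≤ (1/4)·osc_{S_{Δ_n}}(f)·osc_{S_{Δ_n}}(g), where osc_{S_{Δ_n}}(f) := max{|f(k/n) − f(l/n)| : 0 ≤ k < l ≤ n} and similarly for g. -/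

import Mathlib

/-! On the knot interval `[(k-1)/n, k/n]` containing `x`, the interpolant is the convex
combination `μ f((k-1)/n) + λ f(k/n)` with barycentric weights `μ = k - nx`, `λ = nx - k + 1`.
The Chebyshev–Grüss defect of such a two-point mean is exactly `μλ (a - b)(c - d)`, and
`μλ ≤ 1/4` because `μ + λ = 1`; the two differences are differences at adjacent knots,
hence bounded by the oscillations. -/

open Set

lemma abs_two_point_mean_mul_sub_mul_le {μ ν : ℝ} (hμ : 0 ≤ μ) (hν : 0 ≤ ν) (hμν : μ + ν = 1)
    (a b c d : ℝ) :
    |(μ * (a * c) + ν * (b * d)) - (μ * a + ν * b) * (μ * c + ν * d)| ≤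
      1 / 4 * (|a - b| * |c - d|) := by
  have defect : (μ * (a * c) + ν * (b * d)) - (μ * a + ν * b) * (μ * c + ν * d) =
      μ * ν * ((a - b) * (c - d)) := by
    rw [← mul_one (μ * (a * c) + _), ← hμν]; ring
  have weights_le : μ * ν ≤ 1 / 4 := by nlinarith [sq_nonneg (μ - ν)]
  rw [defect, abs_mul, abs_of_nonneg (mul_nonneg hμ hν), ← abs_mul]
  exact mul_le_mul_of_nonneg_right weights_le (abs_nonneg _)

lemma exists_knot_interval_mem {n : ℕ} (hn : 1 ≤ n) {x : ℝ} (hx : x ∈ Icc (0 : ℝ) 1) :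
    ∃ k : ℕ, 1 ≤ k ∧ k ≤ n ∧ x ∈ Icc (((k : ℝ) - 1) / n) ((k : ℝ) / n) := by
  obtain ⟨hx0, hx1⟩ := hx
  have hn0 : (0 : ℝ) < n := by exact_mod_cast hn
  have hnx : 0 ≤ (n : ℝ) * x := by positivity
  refine ⟨max 1 ⌈(n : ℝ) * x⌉₊, le_max_left _ _,
    max_le hn (Nat.ceil_le.mpr (by nlinarith)), ?_, ?_⟩
  · rw [div_le_iff₀ hn0, Nat.cast_max, Nat.cast_one, sub_le_iff_le_add, max_le_iff]
    exact ⟨by nlinarith, by linarith [Nat.ceil_lt_add_one hnx]⟩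
  · rw [le_div_iff₀ hn0, Nat.cast_max, mul_comm]
    exact le_max_of_le_right (Nat.le_ceil _)

lemma abs_sub_adjacent_knots_le_sSup {n k : ℕ} (hk : 1 ≤ k) (hkn : k ≤ n) (f : ℝ → ℝ) :
    |f (((k : ℝ) - 1) / n) - f ((k : ℝ) / n)| ≤
      sSup {d : ℝ | ∃ k l : ℕ, k < l ∧ l ≤ n ∧ d = |f (k / n) - f (l / n)|} := by
  have bdd : BddAbove {d : ℝ | ∃ k l : ℕ, k < l ∧ l ≤ n ∧ d = |f (k / n) - f (l / n)|} := by
    refine (((finite_Iic n).prod (finite_Iic n)).image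
      fun p : ℕ × ℕ => |f (p.1 / (n : ℝ)) - f (p.2 / n)|).bddAbove.mono ?_
    rintro d ⟨k, l, hkl, hln, rfl⟩
    exact ⟨(k, l), ⟨by simp only [mem_Iic]; omega, hln⟩, rfl⟩
  refine le_csSup bdd ⟨k - 1, k, by omega, hkn, ?_⟩
  rw [Nat.cast_sub hk, Nat.cast_one]

theorem piecewise_linear_chebyshev_gruss (n : ℕ) (hn : 1 ≤ n)
    (S : (ℝ → ℝ) → ℝ → ℝ)
    (hS : ∀ (f : ℝ → ℝ) (k : ℕ), 1 ≤ k → k ≤ n →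
      ∀ x ∈ Set.Icc (((k : ℝ) - 1) / n) ((k : ℝ) / n),
        S f x = ((k : ℝ) - n * x) * f (((k : ℝ) - 1) / n)
              + ((n : ℝ) * x - k + 1) * f ((k : ℝ) / n))
    (f g : ℝ → ℝ) (x : ℝ) (hx : x ∈ Set.Icc (0:ℝ) 1) :
    |S (fun t => f t * g t) x - S f x * S g x| ≤
      (1 / 4) *
        sSup {d : ℝ | ∃ k l : ℕ, k < l ∧ l ≤ n ∧ d = |f (k / n) - f (l / n)|} *
        sSup {d : ℝ | ∃ k l : ℕ, k < l ∧ l ≤ n ∧ d = |g (k / n) - g (l / n)|} := by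
  obtain ⟨k, hk, hkn, hxk⟩ := exists_knot_interval_mem hn hx
  have hf := abs_sub_adjacent_knots_le_sSup hk hkn f
  have hg := abs_sub_adjacent_knots_le_sSup hk hkn g
  have hn0 : (0 : ℝ) < n := by exact_mod_cast hn
  have hμ : 0 ≤ (k : ℝ) - n * x := by linarith [(le_div_iff₀ hn0).mp hxk.2, mul_comm x n]
  have hν : 0 ≤ (n : ℝ) * x - k + 1 := by linarith [(div_le_iff₀ hn0).mp hxk.1, mul_comm x n]
  rw [hS _ k hk hkn x hxk, hS f k hk hkn x hxk, hS g k hk hkn x hxk, mul_assoc]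
  calc _ ≤ 1 / 4 * (|f (((k : ℝ) - 1) / n) - f ((k : ℝ) / n)| *
          |g (((k : ℝ) - 1) / n) - g ((k : ℝ) / n)|) :=
        abs_two_point_mean_mul_sub_mul_le hμ hν (by ring) _ _ _ _
    _ ≤ _ := by gcongr; exact (abs_nonneg _).trans hf
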